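/- arXiv:1703.01044 — 2 statements merged into one kernel-verified Lean document; each statement's English description precedes it below -/
import Mathlib

section
/- Let b₀ > 0, a₀ > 0, a₁ > 0, a₂ > 0, W ≥ 0, and let D₁, D₂ be nonnegative integers with a₀ + D₁ + D₂ > 1. Let (λ₁, λ₂) have the Beta-Gamma distribution BG(W + b₀, a₀ + D₁ + D₂, a₁ + D₁, a₂ + D₂). If a₁ + D₁ > 1, then E[1/λ₁] = (a₁ + a₂ + D₁ + D₂ − 1)(W + b₀) / ((a₀ + D₁ + D₂ − 1)(a₁ + D₁ − 1)); and if a₂ + D₂ > 1, then E[1/λ₂] = (a₁ + a₂ + D₁ + D₂ − 1)(W + b₀) / ((a₀ + D₁ + D₂ − 1)(a₂ + D₂ − 1)). These are the Bayes estimates θ̂_{1B} and θ̂_{2B} of θ₁ = 1/λ₁ and θ₂ = 1/λ₂ under squared error loss. -/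
/-!
Substituting `λ₁ = t u`, `λ₂ = t (1 - u)` (Jacobian `t`) splits the `BG(b, a₀, a₁, a₂)` density
into a `Beta(a₁, a₂)` density in `u` times a `Gamma(a₀, b)` density in `t`, so it integrates to
one. By `Γ(s) = (s - 1) Γ(s - 1)`, the density times `1 / λ₁` is a constant multiple of the
`BG(b, a₀ - 1, a₁ - 1, a₂)` density, and that constant is `E[1 / λ₁]`. Exchanging the roles of
`(λ₁, a₁)` and `(λ₂, a₂)` gives `E[1 / λ₂]`.
-/

open MeasureTheory

/-- Joint density of the Beta-Gamma distribution `BG(b₀, a₀, a₁, a₂)` on `(0,∞)²`. -/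
noncomputable def bgPdf (b₀ a₀ a₁ a₂ l₁ l₂ : ℝ) : ℝ :=
  if 0 < l₁ ∧ 0 < l₂ then
    Real.Gamma (a₁ + a₂) / Real.Gamma a₀ * (b₀ * (l₁ + l₂)) ^ (a₀ - a₁ - a₂) *
      (b₀ ^ a₁ / Real.Gamma a₁ * l₁ ^ (a₁ - 1) * Real.exp (-b₀ * l₁)) *
      (b₀ ^ a₂ / Real.Gamma a₂ * l₂ ^ (a₂ - 1) * Real.exp (-b₀ * l₂))
  else 0

/-- The Beta-Gamma distribution `BG(b₀, a₀, a₁, a₂)` as a measure on `ℝ × ℝ`. -/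
noncomputable def bgMeasure (b₀ a₀ a₁ a₂ : ℝ) : Measure (ℝ × ℝ) :=
  volume.withDensity fun p => ENNReal.ofReal (bgPdf b₀ a₀ a₁ a₂ p.1 p.2)

open Set Real ProbabilityTheory
open scoped ENNReal

lemma Real.Gamma_eq_sub_one_mul {s : ℝ} (hs : s ≠ 1) : Gamma s = (s - 1) * Gamma (s - 1) := by
  conv_lhs => rw [← sub_add_cancel s 1]
  exact Real.Gamma_add_one (sub_ne_zero.2 hs)

/-- Inverse of `(λ₁, λ₂) ↦ (λ₁ / (λ₁ + λ₂), λ₁ + λ₂)`. -/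
def ofRatioSum (q : ℝ × ℝ) : ℝ × ℝ := (q.2 * q.1, q.2 * (1 - q.1))

noncomputable def fderivOfRatioSum (q : ℝ × ℝ) : ℝ × ℝ →L[ℝ] ℝ × ℝ :=
  LinearMap.toContinuousLinearMap (Matrix.toLin (Module.Basis.finTwoProd ℝ)
    (Module.Basis.finTwoProd ℝ) !![q.2, q.1; -q.2, 1 - q.1])

lemma hasFDerivAt_ofRatioSum (q : ℝ × ℝ) : HasFDerivAt ofRatioSum (fderivOfRatioSum q) q := by
  rw [fderivOfRatioSum, Matrix.toLin_finTwoProd_toContinuousLinearMap]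
  have hfst : HasFDerivAt (𝕜 := ℝ) Prod.fst _ q := hasFDerivAt_fst
  have hsnd : HasFDerivAt (𝕜 := ℝ) Prod.snd _ q := hasFDerivAt_snd
  convert (hsnd.fun_mul hfst).prodMk (hsnd.fun_mul ((hasFDerivAt_const 1 q).fun_sub hfst))
    using 2 <;>
  ext <;> simp [ofRatioSum]

lemma det_fderivOfRatioSum (q : ℝ × ℝ) : (fderivOfRatioSum q).det = q.2 := by
  simp only [fderivOfRatioSum, LinearMap.det_toContinuousLinearMap, LinearMap.det_toLin,
    Matrix.det_fin_two_of]
  ring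

lemma injOn_ofRatioSum : InjOn ofRatioSum (Ioo 0 1 ×ˢ Ioi 0) := by
  rintro ⟨u, t⟩ ⟨-, ht⟩ ⟨u', t'⟩ - h
  simp only [ofRatioSum, Prod.mk.injEq] at h
  obtain rfl : t = t' := by linear_combination h.1 + h.2
  simp [mul_left_cancel₀ (ne_of_gt ht) h.1]

lemma ofRatioSum_image : ofRatioSum '' (Ioo 0 1 ×ˢ Ioi 0) = Ioi 0 ×ˢ Ioi 0 := by
  ext ⟨x, y⟩
  constructor
  · rintro ⟨⟨u, t⟩, ⟨⟨hu₀, hu₁⟩, ht : 0 < t⟩, h⟩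
    rw [← h]
    exact ⟨mul_pos ht hu₀, mul_pos ht (sub_pos.2 hu₁)⟩
  · rintro ⟨hx : 0 < x, hy : 0 < y⟩
    have hxy : 0 < x + y := add_pos hx hy
    refine ⟨(x / (x + y), x + y), ⟨⟨div_pos hx hxy, (div_lt_one hxy).2 (by linarith)⟩, hxy⟩, ?_⟩
    simp only [ofRatioSum, Prod.mk.injEq]
    constructor <;> field_simp; ring

lemma setLIntegral_Ioi_prod_Ioi_eq_ofRatioSum (f : ℝ × ℝ → ℝ≥0∞) :
    ∫⁻ p in Ioi 0 ×ˢ Ioi 0, f p =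
      ∫⁻ q in Ioo 0 1 ×ˢ Ioi 0, ENNReal.ofReal q.2 * f (ofRatioSum q) := by
  rw [← ofRatioSum_image, lintegral_image_eq_lintegral_abs_det_fderiv_mul volume
    (measurableSet_Ioo.prod measurableSet_Ioi)
    (fun q _ ↦ (hasFDerivAt_ofRatioSum q).hasFDerivWithinAt) injOn_ofRatioSum]
  refine setLIntegral_congr_fun (measurableSet_Ioo.prod measurableSet_Ioi) fun q hq ↦ ?_
  rw [det_fderivOfRatioSum, abs_of_pos hq.2]

section BetaGamma

variable {b a₀ a₁ a₂ : ℝ}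

lemma bgPdf_nonneg (hb : 0 ≤ b) (h₀ : 0 ≤ a₀) (h₁ : 0 ≤ a₁) (h₂ : 0 ≤ a₂) (l₁ l₂ : ℝ) :
    0 ≤ bgPdf b a₀ a₁ a₂ l₁ l₂ := by
  have := Gamma_nonneg_of_nonneg h₀
  have := Gamma_nonneg_of_nonneg h₁
  have := Gamma_nonneg_of_nonneg h₂
  have := Gamma_nonneg_of_nonneg (add_nonneg h₁ h₂)
  unfold bgPdf
  split_ifs with h
  · have := h.1.le
    have := h.2.le
    positivity
  · exact le_rfl

variable (b a₀ a₁ a₂) in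
lemma measurable_bgPdf : Measurable fun p : ℝ × ℝ ↦ bgPdf b a₀ a₁ a₂ p.1 p.2 :=
  Measurable.ite ((measurableSet_lt measurable_const measurable_fst).inter
    (measurableSet_lt measurable_const measurable_snd)) (by fun_prop) measurable_const

lemma mul_bgPdf_ofRatioSum (hb : 0 < b) {q : ℝ × ℝ} (hq : q ∈ Ioo 0 1 ×ˢ Ioi 0) :
    q.2 * bgPdf b a₀ a₁ a₂ (ofRatioSum q).1 (ofRatioSum q).2 =
      betaPDFReal a₁ a₂ q.1 * gammaPDFReal a₀ b q.2 := by
  obtain ⟨u, t⟩ := q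
  obtain ⟨⟨hu, hu'⟩, ht : 0 < t⟩ := hq
  have hv : 0 < 1 - u := sub_pos.2 hu'
  rw [ofRatioSum, bgPdf, if_pos ⟨mul_pos ht hu, mul_pos ht hv⟩, betaPDFReal, if_pos ⟨hu, hu'⟩,
    gammaPDFReal, if_pos ht.le, beta, one_div_div]
  have hsum : t * u + t * (1 - u) = t := by ring
  have hb_pow : b ^ a₀ = b ^ (a₀ - a₁ - a₂) * b ^ a₁ * b ^ a₂ := by
    rw [← rpow_add hb, ← rpow_add hb]; ring_nf
  have ht_pow : t ^ (a₀ - 1) = t ^ (a₀ - a₁ - a₂) * t ^ (a₁ - 1) * t ^ (a₂ - 1) * t := by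
    rw [← rpow_add ht, ← rpow_add ht, ← rpow_add_one ht.ne']; ring_nf
  have hexp : exp (-(b * t)) = exp (-b * (t * u)) * exp (-b * (t * (1 - u))) := by
    rw [← exp_add]; ring_nf
  dsimp only
  rw [hsum, mul_rpow hb.le ht.le, mul_rpow ht.le hu.le, mul_rpow ht.le hv.le, hb_pow, ht_pow, hexp]
  ring

lemma lintegral_bgPdf_eq_one (hb : 0 < b) (h₀ : 0 < a₀) (h₁ : 0 < a₁) (h₂ : 0 < a₂) :
    ∫⁻ p : ℝ × ℝ, ENNReal.ofReal (bgPdf b a₀ a₁ a₂ p.1 p.2) = 1 := by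
  calc ∫⁻ p : ℝ × ℝ, ENNReal.ofReal (bgPdf b a₀ a₁ a₂ p.1 p.2)
      = ∫⁻ p in Ioi 0 ×ˢ Ioi 0, ENNReal.ofReal (bgPdf b a₀ a₁ a₂ p.1 p.2) := by
        refine (setLIntegral_eq_of_support_subset fun p hp ↦ ?_).symm
        by_contra h
        apply hp
        simp only [bgPdf, if_neg (show ¬(0 < p.1 ∧ 0 < p.2) from h), ENNReal.ofReal_zero]
    _ = ∫⁻ q in Ioo 0 1 ×ˢ Ioi 0, betaPDF a₁ a₂ q.1 * gammaPDF a₀ b q.2 := by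
        rw [setLIntegral_Ioi_prod_Ioi_eq_ofRatioSum]
        refine setLIntegral_congr_fun (measurableSet_Ioo.prod measurableSet_Ioi) fun q hq ↦ ?_
        rw [← ENNReal.ofReal_mul hq.2.le, mul_bgPdf_ofRatioSum hb hq,
          ENNReal.ofReal_mul (betaPDFReal_pos hq.1.1 hq.1.2 h₁ h₂).le, betaPDF, gammaPDF]
    _ = (∫⁻ u in Ioo 0 1, betaPDF a₁ a₂ u) * ∫⁻ t in Ioi 0, gammaPDF a₀ b t := by
        rw [Measure.volume_eq_prod, ← Measure.prod_restrict,
          lintegral_prod_mul (f := betaPDF a₁ a₂) (g := gammaPDF a₀ b)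
            (measurable_betaPDFReal a₁ a₂).ennreal_ofReal.aemeasurable
            (measurable_gammaPDFReal a₀ b).ennreal_ofReal.aemeasurable]
    _ = 1 := by
        rw [setLIntegral_eq_of_support_subset, lintegral_betaPDF_eq_one h₁ h₂,
          setLIntegral_congr Ioi_ae_eq_Ici, setLIntegral_eq_of_support_subset,
          lintegral_gammaPDF_eq_one h₀ hb, one_mul]
        · exact fun t ht ↦ not_lt.1 fun h ↦ ht (gammaPDF_of_neg h)
        · refine fun u hu ↦ ⟨?_, ?_⟩
          · exact not_le.1 fun h ↦ hu (betaPDF_eq_zero_of_nonpos h)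
          · exact not_le.1 fun h ↦ hu (betaPDF_eq_zero_of_one_le h)

lemma integral_bgPdf_eq_one (hb : 0 < b) (h₀ : 0 < a₀) (h₁ : 0 < a₁) (h₂ : 0 < a₂) :
    ∫ p : ℝ × ℝ, bgPdf b a₀ a₁ a₂ p.1 p.2 = 1 := by
  rw [integral_eq_lintegral_of_nonneg_ae (f := fun p : ℝ × ℝ ↦ bgPdf b a₀ a₁ a₂ p.1 p.2)
    (ae_of_all _ fun p ↦ bgPdf_nonneg hb.le h₀.le h₁.le h₂.le p.1 p.2)
    (measurable_bgPdf b a₀ a₁ a₂).aestronglyMeasurable,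
    lintegral_bgPdf_eq_one hb h₀ h₁ h₂, ENNReal.toReal_one]

lemma integral_bgMeasure (hb : 0 ≤ b) (h₀ : 0 ≤ a₀) (h₁ : 0 ≤ a₁) (h₂ : 0 ≤ a₂)
    (g : ℝ × ℝ → ℝ) :
    ∫ p, g p ∂bgMeasure b a₀ a₁ a₂ = ∫ p, bgPdf b a₀ a₁ a₂ p.1 p.2 * g p := by
  rw [bgMeasure, integral_withDensity_eq_integral_toReal_smul
    (measurable_bgPdf b a₀ a₁ a₂).ennreal_ofReal (ae_of_all _ fun _ ↦ ENNReal.ofReal_lt_top)]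
  simp_rw [ENNReal.toReal_ofReal (bgPdf_nonneg hb h₀ h₁ h₂ _ _), smul_eq_mul]

lemma bgPdf_mul_inv_fst (hb : b ≠ 0) (h₀ : a₀ ≠ 1) (h₁ : a₁ ≠ 1) (h₁₂ : a₁ + a₂ ≠ 1)
    (l₁ l₂ : ℝ) :
    bgPdf b a₀ a₁ a₂ l₁ l₂ * (1 / l₁) =
      (a₁ + a₂ - 1) * b / ((a₀ - 1) * (a₁ - 1)) * bgPdf b (a₀ - 1) (a₁ - 1) a₂ l₁ l₂ := by
  unfold bgPdf
  split_ifs with h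
  · have hb_pow : b ^ a₁ = b ^ (a₁ - 1) * b := by rw [← rpow_add_one hb, sub_add_cancel]
    rw [Real.Gamma_eq_sub_one_mul h₀, Real.Gamma_eq_sub_one_mul h₁,
      Real.Gamma_eq_sub_one_mul h₁₂, hb_pow, rpow_sub_one h.1.ne' (a₁ - 1),
      show a₀ - 1 - (a₁ - 1) - a₂ = a₀ - a₁ - a₂ by ring, show a₁ - 1 + a₂ = a₁ + a₂ - 1 by ring]
    simp only [div_eq_mul_inv, mul_inv]
    ring
  · simp

lemma integral_inv_fst_bgMeasure (hb : 0 < b) (h₀ : 1 < a₀) (h₁ : 1 < a₁) (h₂ : 0 < a₂) :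
    ∫ p, 1 / p.1 ∂bgMeasure b a₀ a₁ a₂ = (a₁ + a₂ - 1) * b / ((a₀ - 1) * (a₁ - 1)) := by
  rw [integral_bgMeasure hb.le (by linarith) (by linarith) h₂.le]
  simp_rw [bgPdf_mul_inv_fst hb.ne' h₀.ne' h₁.ne' (by linarith : a₁ + a₂ ≠ 1)]
  rw [integral_const_mul, integral_bgPdf_eq_one hb (by linarith) (by linarith) h₂, mul_one]

variable (b a₀ a₁ a₂) in
lemma bgPdf_swap (l₁ l₂ : ℝ) : bgPdf b a₀ a₂ a₁ l₂ l₁ = bgPdf b a₀ a₁ a₂ l₁ l₂ := by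
  unfold bgPdf
  by_cases h : 0 < l₁ ∧ 0 < l₂
  · rw [if_pos h.symm, if_pos h, add_comm a₂, add_comm l₂, sub_right_comm a₀ a₂]
    ring
  · rw [if_neg (mt And.symm h), if_neg h]

variable (b a₀ a₁ a₂) in
lemma map_swap_bgMeasure : (bgMeasure b a₀ a₁ a₂).map Prod.swap = bgMeasure b a₀ a₂ a₁ := by
  ext s hs
  rw [Measure.map_apply measurable_swap hs, bgMeasure, bgMeasure,
    withDensity_apply _ (measurable_swap hs), withDensity_apply _ hs]
  simp_rw [← bgPdf_swap b a₀ a₁ a₂]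
  exact (Measure.measurePreserving_swap (μ := volume) (ν := volume)).setLIntegral_comp_preimage hs
    (measurable_bgPdf b a₀ a₂ a₁).ennreal_ofReal

lemma integral_inv_snd_bgMeasure (hb : 0 < b) (h₀ : 1 < a₀) (h₁ : 0 < a₁) (h₂ : 1 < a₂) :
    ∫ p, 1 / p.2 ∂bgMeasure b a₀ a₁ a₂ = (a₁ + a₂ - 1) * b / ((a₀ - 1) * (a₂ - 1)) := by
  rw [← map_swap_bgMeasure, integral_map (f := fun p : ℝ × ℝ ↦ 1 / p.2)
    measurable_swap.aemeasurable (measurable_const.div measurable_snd).aestronglyMeasurable,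
    add_comm a₁]
  exact integral_inv_fst_bgMeasure hb h₀ h₂ h₁

end BetaGamma

theorem bayes_estimates_of_theta_general (b₀ a₀ a₁ a₂ W : ℝ)
    (hb₀ : 0 < b₀) (ha₁ : 0 < a₁) (ha₂ : 0 < a₂) (hW : 0 ≤ W)
    (D₁ D₂ : ℕ) (hpost : 1 < a₀ + D₁ + D₂) :
    (1 < a₁ + D₁ →
      ∫ p : ℝ × ℝ, 1 / p.1
          ∂(bgMeasure (W + b₀) (a₀ + D₁ + D₂) (a₁ + D₁) (a₂ + D₂)) =
        (a₁ + a₂ + D₁ + D₂ - 1) * (W + b₀) /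
          ((a₀ + D₁ + D₂ - 1) * (a₁ + D₁ - 1))) ∧
    (1 < a₂ + D₂ →
      ∫ p : ℝ × ℝ, 1 / p.2
          ∂(bgMeasure (W + b₀) (a₀ + D₁ + D₂) (a₁ + D₁) (a₂ + D₂)) =
        (a₁ + a₂ + D₁ + D₂ - 1) * (W + b₀) /
          ((a₀ + D₁ + D₂ - 1) * (a₂ + D₂ - 1))) := by
  have hb : 0 < W + b₀ := by linarith
  have hD₁ : (0 : ℝ) ≤ D₁ := D₁.cast_nonneg
  have hD₂ : (0 : ℝ) ≤ D₂ := D₂.cast_nonneg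
  refine ⟨fun h₁ ↦ ?_, fun h₂ ↦ ?_⟩
  · rw [integral_inv_fst_bgMeasure hb hpost h₁ (by linarith)]
    ring
  · rw [integral_inv_snd_bgMeasure hb hpost (by linarith) h₂]
    ring

/-- Posterior means (Bayes estimates under squared error loss): if
`(λ₁, λ₂) ~ BG(W + b₀, a₀ + D₁ + D₂, a₁ + D₁, a₂ + D₂)` then, provided `a₁ + D₁ > 1`,
`E[1/λ₁] = (a₁ + a₂ + D₁ + D₂ − 1)(W + b₀) / ((a₀ + D₁ + D₂ − 1)(a₁ + D₁ − 1))`,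
and symmetrically for `E[1/λ₂]` when `a₂ + D₂ > 1`. -/
theorem bayes_estimates_of_theta (b₀ a₀ a₁ a₂ W : ℝ)
    (hb₀ : 0 < b₀) (ha₀ : 0 < a₀) (ha₁ : 0 < a₁) (ha₂ : 0 < a₂) (hW : 0 ≤ W)
    (D₁ D₂ : ℕ) (hpost : 1 < a₀ + D₁ + D₂) :
    (1 < a₁ + D₁ →
      ∫ p : ℝ × ℝ, 1 / p.1
          ∂(bgMeasure (W + b₀) (a₀ + D₁ + D₂) (a₁ + D₁) (a₂ + D₂)) =
        (a₁ + a₂ + D₁ + D₂ - 1) * (W + b₀) /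
          ((a₀ + D₁ + D₂ - 1) * (a₁ + D₁ - 1))) ∧
    (1 < a₂ + D₂ →
      ∫ p : ℝ × ℝ, 1 / p.2
          ∂(bgMeasure (W + b₀) (a₀ + D₁ + D₂) (a₁ + D₁) (a₂ + D₂)) =
        (a₁ + a₂ + D₁ + D₂ - 1) * (W + b₀) /
          ((a₀ + D₁ + D₂ - 1) * (a₂ + D₂ - 1))) :=
  bayes_estimates_of_theta_general b₀ a₀ a₁ a₂ W hb₀ ha₁ ha₂ hW D₁ D₂ hpost
end

section
/- Let n ≥ 1 and m ≥ 1 be integers, let R₁, …, R_m be nonnegative integers with R₁ + ⋯ + R_m ≤ n − m, and set γ_v = n − v + 1 − Σ_{u=1}^{v−1} R_u for 1 ≤ v ≤ m + 1. Let θ > 0, T > 0, let i be an integer with 1 ≤ i ≤ m, and let t be a real number with t/i < 1/θ; write s = 1/θ − t/i > 0. Then ∫_{0 < z₁ < ⋯ < z_m < T} exp(−s Σ_{h=1}^{m} z_h (1 + R_h)) dz₁ ⋯ dz_m = s^{−m} Σ_{v=0}^{m} (−1)^v e^{−s T (γ_{m−v+1} − γ_{m+1})} / [ (∏_{j=1}^{v}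 (γ_{m−v+1} − γ_{m−v+j+1})) (∏_{j=1}^{m−v} (γ_j − γ_{m−v+1})) ]. (This identity is the computational content of the conditional moment generating function of θ̂₁ given Z_{k:m:n} < Z_{m:m:n} < T and D₁ = i.) -/
/-!
Peeling off the smallest coordinate `z₁ = x` writes the integral over the ordered simplex
`{L < z₁ < ⋯ < z_m < T}` as a one-dimensional integral over `x` of the same kind of integral one
dimension lower, with lower end `x`. By induction, for pairwise distinct `c₀, …, c_m`,
`∫ exp (∑ z_h (c_{h-1} - c_h)) = ∑_k w_k exp (T (c_k - c_m) + L (c₀ - c_k))`, where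
`w_k = ∏_{j ≠ k} (c_k - c_j)⁻¹` are the Lagrange nodal weights; the induction step closes
because the nodal weights sum to zero. The theorem is the case `L = 0`, `c_k = -s γ_{k+1}`, since
`1 + R_h = γ_h - γ_{h+1}`.
-/

open MeasureTheory

/-- `γ_v = n − v + 1 − Σ_{u=1}^{v−1} R_u`, the number of surviving units at the time of the
`v`-th failure in a progressive censoring scheme with removals `R 1, R 2, …`. -/
noncomputable def gam (n : ℕ) (R : ℕ → ℕ) (v : ℕ) : ℝ :=
  (n : ℝ) - v + 1 - ∑ u ∈ Finset.Icc 1 (v - 1), (R u : ℝ)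

open Finset Lagrange

theorem Finset.prod_range_erase {M : Type*} [CommMonoid M] (f : ℕ → M) {m k : ℕ}
    (hk : k ≤ m) :
    ∏ j ∈ (range (m + 1)).erase k, f j =
      (∏ j ∈ range k, f j) * ∏ j ∈ Icc 1 (m - k), f (k + j) := by
  have hs : (range (m + 1)).erase k = range k ∪ (Icc 1 (m - k)).map (addLeftEmbedding k) := by
    ext j
    simp only [mem_erase, mem_range, mem_union, mem_map, mem_Icc, addLeftEmbedding_apply]
    constructor
    · intro h
      by_cases hj : j < k
      · exact Or.inl hj
      · exact Or.inr ⟨j - k, by omega, by omega⟩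
    · rintro (h | ⟨i, hi, rfl⟩) <;> omega
  rw [hs, prod_union, prod_map]
  · rfl
  · rw [disjoint_left]
    simp only [mem_range, mem_map, mem_Icc, addLeftEmbedding_apply]
    rintro j hj ⟨i, hi, rfl⟩
    omega

namespace Lagrange

variable {F ι : Type*} [Field F] [DecidableEq ι]

theorem sum_nodalWeight_eq_zero {s : Finset ι} {v : ι → F} (hvs : Set.InjOn v s)
    (hs : 2 ≤ #s) : ∑ i ∈ s, nodalWeight s v i = 0 := by
  have h := coeff_eq_sum hvs (P := 1)
    (by rw [Polynomial.degree_one]; exact_mod_cast (by omega))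
  rw [Polynomial.coeff_one, if_neg (by omega)] at h
  simpa [nodalWeight, div_eq_mul_inv, prod_inv_distrib] using h.symm

theorem nodalWeight_const_mul {s : Finset ι} {v : ι → F} {i : ι} (hi : i ∈ s) (a : F) :
    nodalWeight s (fun j => a * v j) i = (a ^ (#s - 1))⁻¹ * nodalWeight s v i := by
  simp_rw [nodalWeight, ← mul_sub, mul_inv, prod_mul_distrib, prod_const, card_erase_of_mem hi,
    inv_pow]

theorem nodalWeight_range_succ (v : ℕ → F) (m k : ℕ) :
    nodalWeight (range (m + 2)) v (k + 1) =
      (v (k + 1) - v 0)⁻¹ * nodalWeight (range (m + 1)) (fun j => v (j + 1)) k := by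
  have hs : (range (m + 2)).erase (k + 1) =
      insert 0 (((range (m + 1)).erase k).map (addRightEmbedding 1)) := by
    ext j
    rcases j with _ | j <;> simp
  rw [nodalWeight, hs, prod_insert (by simp), prod_map]
  rfl

theorem nodalWeight_range_neg (g : ℕ → F) {m k : ℕ} (hk : k ≤ m) :
    nodalWeight (range (m + 1)) (fun j => -g (j + 1)) k =
      (-1) ^ (m - k) / ((∏ j ∈ Icc 1 (m - k), (g (k + 1) - g (k + j + 1))) *
        ∏ j ∈ Icc 1 k, (g j - g (k + 1))) := by
  have hlow :
      ∏ j ∈ range k, (-g (k + 1) - -g (j + 1)) = ∏ j ∈ Icc 1 k, (g j - g (k + 1)) := by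
    rw [range_eq_Ico, prod_Ico_add' (fun j => -g (k + 1) - -g j), zero_add,
      Ico_add_one_right_eq_Icc]
    exact prod_congr rfl fun _ _ => by ring
  have hhigh : ∏ j ∈ Icc 1 (m - k), (-g (k + 1) - -g (k + j + 1)) =
      (-1) ^ (m - k) * ∏ j ∈ Icc 1 (m - k), (g (k + 1) - g (k + j + 1)) := by
    have h := prod_neg (s := Icc 1 (m - k)) fun j => g (k + 1) - g (k + j + 1)
    rw [Nat.card_Icc, Nat.add_sub_cancel] at h
    rw [← h]
    exact prod_congr rfl fun _ _ => by ring
  rw [nodalWeight, prod_inv_distrib, prod_range_erase _ hk, hlow, hhigh, div_eq_mul_inv,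
    mul_inv, mul_inv, ← inv_pow, inv_neg_one]
  ring

end Lagrange

def orderedSimplex (m : ℕ) (L T : ℝ) : Set (Fin m → ℝ) :=
  {z | StrictMono z ∧ ∀ h, L < z h ∧ z h < T}

namespace orderedSimplex

theorem isOpen (m : ℕ) (L T : ℝ) : IsOpen (orderedSimplex m L T) := by
  have : orderedSimplex m L T = (⋂ (i : Fin m) (j : Fin m) (_ : i < j), {z | z i < z j}) ∩
      ⋂ h, {z | L < z h} ∩ {z | z h < T} := by
    ext z
    simp [orderedSimplex, StrictMono, forall_and]
  rw [this]
  refine .inter (isOpen_iInter_of_finite fun i => isOpen_iInter_of_finite fun j =>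
    isOpen_iInter_of_finite fun _ => isOpen_lt (continuous_apply i) (continuous_apply j))
    (isOpen_iInter_of_finite fun h => .inter (isOpen_lt continuous_const (continuous_apply h))
      (isOpen_lt (continuous_apply h) continuous_const))

theorem subset_Icc (m : ℕ) (L T : ℝ) :
    orderedSimplex m L T ⊆ Set.Icc (fun _ => L) (fun _ => T) :=
  fun _ hz => ⟨fun h => (hz.2 h).1.le, fun h => (hz.2 h).2.le⟩

theorem cons_mem_iff {m : ℕ} {L T x : ℝ} {w : Fin m → ℝ} :
    Fin.cons x w ∈ orderedSimplex (m + 1) L T ↔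
      x ∈ Set.Ioo L T ∧ w ∈ orderedSimplex m x T := by
  simp only [orderedSimplex, Set.mem_ofPred_eq, Fin.strictMono_cons, Fin.forall_fin_succ,
    Fin.cons_zero, Fin.cons_succ, Set.mem_Ioo]
  constructor
  · rintro ⟨⟨hx, hw⟩, hxT, hwT⟩
    exact ⟨hxT, hw, fun h => ⟨hx h, (hwT h).2⟩⟩
  · rintro ⟨hxT, hw, hwT⟩
    exact ⟨⟨fun h => (hwT h).1, hw⟩, hxT, fun h => ⟨hxT.1.trans (hwT h).1, (hwT h).2⟩⟩

end orderedSimplex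

theorem setIntegral_orderedSimplex_succ {E : Type*} [NormedAddCommGroup E] [NormedSpace ℝ E]
    {m : ℕ} {L T : ℝ} {g : (Fin (m + 1) → ℝ) → E}
    (hg : IntegrableOn g (orderedSimplex (m + 1) L T)) :
    ∫ z in orderedSimplex (m + 1) L T, g z =
      ∫ x in Set.Ioo L T, ∫ w in orderedSimplex m x T, g (Fin.cons x w) := by
  have he := (volume_preserving_piFinSuccAbove (fun _ : Fin (m + 1) => ℝ) 0).symm
  have hcons : ∀ p : ℝ × (Fin m → ℝ),
      (MeasurableEquiv.piFinSuccAbove (fun _ => ℝ) 0).symm p = Fin.cons p.1 p.2 := by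
    rintro ⟨x, w⟩
    simp [MeasurableEquiv.piFinSuccAbove_symm_apply, Fin.insertNthEquiv]
  have hind : ∀ x w, (orderedSimplex (m + 1) L T).indicator g (Fin.cons x w) =
      (Set.Ioo L T).indicator
        (fun x => (orderedSimplex m x T).indicator (fun w => g (Fin.cons x w)) w) x := by
    intro x w
    by_cases hx : x ∈ Set.Ioo L T <;> by_cases hw : w ∈ orderedSimplex m x T <;>
      simp [Set.indicator, orderedSimplex.cons_mem_iff, hx, hw]
  have hS := (orderedSimplex.isOpen (m + 1) L T).measurableSet
  have hint := (he.integrable_comp_emb (MeasurableEquiv.measurableEmbedding _)).mpr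
    ((integrable_indicator_iff hS).mpr hg)
  rw [← integral_indicator hS, ← he.integral_comp', Measure.volume_eq_prod,
    integral_prod _ (by rw [← Measure.volume_eq_prod]; exact hint),
    ← integral_indicator measurableSet_Ioo]
  congr 1 with x
  simp_rw [hcons, hind]
  by_cases hx : x ∈ Set.Ioo L T
  · simp [hx, integral_indicator (orderedSimplex.isOpen _ _ _).measurableSet]
  · simp [hx]

theorem integrableOn_orderedSimplex {E : Type*} [NormedAddCommGroup E] {m : ℕ}
    {g : (Fin m → ℝ) → E} (hg : Continuous g) (L T : ℝ) :
    IntegrableOn g (orderedSimplex m L T) :=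
  (hg.integrableOn_Icc).mono_set (orderedSimplex.subset_Icc m L T)

theorem integral_Ioo_exp_add_mul (a : ℝ) {d : ℝ} (hd : d ≠ 0) {L T : ℝ} (hLT : L ≤ T) :
    ∫ x in Set.Ioo L T, Real.exp (a + x * d) =
      (Real.exp (a + T * d) - Real.exp (a + L * d)) / d := by
  simp_rw [Real.exp_add, integral_const_mul]
  rw [← integral_Ioc_eq_integral_Ioo, ← intervalIntegral.integral_of_le hLT]
  simp_rw [mul_comm _ d]
  rw [intervalIntegral.integral_comp_mul_left Real.exp hd, integral_exp, smul_eq_mul]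
  field_simp

/-- `exp (L c₀ - T c_m)` times the divided difference of `t ↦ exp ((T - L) t)` at
`c₀, …, c_m`. -/
noncomputable def expNodalSum (c : ℕ → ℝ) (m : ℕ) (L T : ℝ) : ℝ :=
  ∑ k ∈ range (m + 1),
    nodalWeight (range (m + 1)) c k * Real.exp (T * (c k - c m) + L * (c 0 - c k))

theorem integral_exp_mul_expNodalSum {c : ℕ → ℝ} {m : ℕ} (hc : Set.InjOn c (range (m + 2)))
    {L T : ℝ} (hLT : L ≤ T) :
    ∫ x in Set.Ioo L T, Real.exp (x * (c 0 - c 1)) * expNodalSum (fun j => c (j + 1)) m x T =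
      expNodalSum c (m + 1) L T := by
  have hsum := sum_nodalWeight_eq_zero hc (by simp)
  rw [sum_range_succ'] at hsum
  simp_rw [nodalWeight_range_succ] at hsum
  simp_rw [expNodalSum, mul_sum]
  rw [integral_finsetSum _ fun k _ =>
      ((by fun_prop : Continuous _).integrableOn_Icc).mono_set Set.Ioo_subset_Icc_self,
    sum_range_succ' _ (m + 1), eq_neg_of_add_eq_zero_right hsum, neg_mul, sum_mul,
    ← sub_eq_add_neg, ← sum_sub_distrib]
  refine sum_congr rfl fun k hk => ?_
  have hd : c 0 - c (k + 1) ≠ 0 :=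
    sub_ne_zero.mpr fun h => by simpa using hc (by simp) (by simpa using hk) h
  have hexp : ∀ x, Real.exp (x * (c 0 - c 1)) *
      (nodalWeight (range (m + 1)) (fun j => c (j + 1)) k *
        Real.exp (T * (c (k + 1) - c (m + 1)) + x * (c (0 + 1) - c (k + 1)))) =
      nodalWeight (range (m + 1)) (fun j => c (j + 1)) k *
        Real.exp (T * (c (k + 1) - c (m + 1)) + x * (c 0 - c (k + 1))) := fun x => by
    rw [mul_left_comm, ← Real.exp_add]
    ring_nf
  have hET : T * (c (k + 1) - c (m + 1)) + T * (c 0 - c (k + 1)) =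
      T * (c 0 - c (m + 1)) + L * (c 0 - c 0) := by
    ring
  simp_rw [hexp]
  rw [integral_const_mul, integral_Ioo_exp_add_mul _ hd hLT, nodalWeight_range_succ, hET,
    show c (k + 1) - c 0 = -(c 0 - c (k + 1)) by ring]
  field_simp
  ring

theorem integral_orderedSimplex_exp (m : ℕ) {c : ℕ → ℝ} (hc : Set.InjOn c (range (m + 1)))
    {L T : ℝ} (hLT : L ≤ T) :
    ∫ z in orderedSimplex m L T, Real.exp (∑ h : Fin m, z h * (c h - c (h + 1))) =
      expNodalSum c m L T := by
  induction m generalizing c L with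
  | zero =>
    have : orderedSimplex 0 L T = Set.univ :=
      Set.eq_univ_of_forall fun z => ⟨Subsingleton.strictMono z, finZeroElim⟩
    simp [expNodalSum, nodalWeight, this, Measure.real, volume_pi]
  | succ m ih =>
    have hc' : Set.InjOn (fun j => c (j + 1)) (range (m + 1)) := fun i hi j hj hij => by
      simpa using hc (by simpa using hi) (by simpa using hj) hij
    rw [setIntegral_orderedSimplex_succ (integrableOn_orderedSimplex (by fun_prop) _ _),
      ← integral_exp_mul_expNodalSum hc hLT]
    refine setIntegral_congr_fun measurableSet_Ioo fun x hx => ?_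
    simp only [Fin.sum_univ_succ, Fin.cons_zero, Fin.cons_succ, Fin.val_succ, Fin.val_zero]
    simp_rw [Real.exp_add (x * _), integral_const_mul]
    exact congrArg _ (ih hc' hx.2.le)

theorem gam_sub_gam_succ (n : ℕ) (R : ℕ → ℕ) {v : ℕ} (hv : 1 ≤ v) :
    gam n R v - gam n R (v + 1) = 1 + R v := by
  obtain ⟨w, rfl⟩ := Nat.exists_eq_add_of_le' hv
  simp only [gam, Nat.add_sub_cancel, sum_Icc_succ_top (Nat.le_add_left 1 w)]
  push_cast
  ring

theorem strictAnti_gam_succ (n : ℕ) (R : ℕ → ℕ) : StrictAnti fun k => gam n R (k + 1) :=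
  strictAnti_nat_of_succ_lt fun k => by
    have := gam_sub_gam_succ n R (Nat.le_add_left 1 k)
    linarith [(R (k + 1)).cast_nonneg (α := ℝ)]

theorem mgf_integral_case_Zm_general (n m : ℕ) (R : ℕ → ℕ)
    (θ T : ℝ) (hT : 0 < T)
    (i : ℕ)
    (t s : ℝ) (ht : t / i < 1 / θ) (hs : s = 1 / θ - t / i) :
    ∫ z in {z : Fin m → ℝ | StrictMono z ∧ ∀ h, 0 < z h ∧ z h < T},
        Real.exp (-s * ∑ h, z h * (1 + (R (h.1 + 1) : ℝ))) =
      s ^ (-(m : ℤ)) *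
        ∑ v ∈ Finset.range (m + 1),
          (-1 : ℝ) ^ v * Real.exp (-s * T * (gam n R (m - v + 1) - gam n R (m + 1))) /
            ((∏ j ∈ Finset.Icc 1 v, (gam n R (m - v + 1) - gam n R (m - v + j + 1))) *
              (∏ j ∈ Finset.Icc 1 (m - v), (gam n R j - gam n R (m - v + 1)))) := by
  have hs0 : s ≠ 0 := by rw [hs]; linarith
  set c : ℕ → ℝ := fun k => s * -gam n R (k + 1)
  have hc : Set.InjOn c (range (m + 1)) := fun k _ l _ hkl =>
    (strictAnti_gam_succ n R).injective (by simpa [c, hs0] using hkl)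
  have hexp : ∀ z : Fin m → ℝ, -s * ∑ h, z h * (1 + (R (h.1 + 1) : ℝ)) =
      ∑ h : Fin m, z h * (c h - c (h + 1)) := fun z => by
    rw [mul_sum]
    refine sum_congr rfl fun h _ => ?_
    rw [← gam_sub_gam_succ n R (Nat.le_add_left 1 h)]
    ring
  simp_rw [hexp]
  refine (integral_orderedSimplex_exp m hc hT.le).trans ?_
  rw [expNodalSum, mul_sum, ← sum_range_reflect]
  refine sum_congr rfl fun k hk => ?_
  have hkm : k ≤ m := Nat.lt_succ_iff.mp (mem_range.mp hk)
  rw [show m + 1 - 1 - k = m - k by omega,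
    nodalWeight_const_mul (s := range (m + 1)) (mem_range.mpr (by omega)), card_range,
    Nat.add_sub_cancel, nodalWeight_range_neg _ (Nat.sub_le m k), Nat.sub_sub_self hkm, zpow_neg,
    zpow_natCast]
  have hE : T * (c (m - k) - c m) + 0 * (c 0 - c (m - k)) =
      -s * T * (gam n R (m - k + 1) - gam n R (m + 1)) := by
    simp only [c]
    ring
  rw [hE]
  ring

/-- The iterated integral over the ordered simplex `{0 < z₁ < ⋯ < z_m < T}` of
`exp(−s Σ_{h=1}^{m} z_h (1 + R_h))` equals
`s^{−m} Σ_{v=0}^{m} (−1)^v e^{−s T (γ_{m−v+1} − γ_{m+1})} / [⋯]`; this is the computational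
content of the conditional MGF of `θ̂₁` given `Z_{k:m:n} < Z_{m:m:n} < T`, `D₁ = i`. -/
theorem mgf_integral_case_Zm (n m : ℕ) (hn : 1 ≤ n) (hm : 1 ≤ m) (R : ℕ → ℕ)
    (hR : (∑ u ∈ Finset.Icc 1 m, R u) + m ≤ n)
    (θ T : ℝ) (hθ : 0 < θ) (hT : 0 < T)
    (i : ℕ) (hi1 : 1 ≤ i) (him : i ≤ m)
    (t s : ℝ) (ht : t / i < 1 / θ) (hs : s = 1 / θ - t / i) :
    ∫ z in {z : Fin m → ℝ | StrictMono z ∧ ∀ h, 0 < z h ∧ z h < T},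
        Real.exp (-s * ∑ h, z h * (1 + (R (h.1 + 1) : ℝ))) =
      s ^ (-(m : ℤ)) *
        ∑ v ∈ Finset.range (m + 1),
          (-1 : ℝ) ^ v * Real.exp (-s * T * (gam n R (m - v + 1) - gam n R (m + 1))) /
            ((∏ j ∈ Finset.Icc 1 v, (gam n R (m - v + 1) - gam n R (m - v + j + 1))) *
              (∏ j ∈ Finset.Icc 1 (m - v), (gam n R j - gam n R (m - v + 1)))) :=
  mgf_integral_case_Zm_general n m R θ T hT i t s ht hs
end
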